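/- arXiv:2305.09904 — 2 statements merged into one kernel-verified Lean document; each statement's English description precedes it below -/
import Mathlib

section
/- Suppose P : ℝ → ℝ^{n×k} and Q : ℝ → ℝ^{m×k} are differentiable and satisfy the perturbed gradient flow Ṗ = (Ȳ − PQᵀ)Q + U, Q̇ = (Ȳ − PQᵀ)ᵀP + V. Then the loss L(P,Q) = (1/2)‖Ȳ − PQᵀ‖_F² satisfies d/dt L(P(t),Q(t)) ≤ −L(P,Q)·(σ_min(P)² + σ_min(Q)²) + (1/2)(‖U‖_F² + ‖V‖_F²). -/
/-!
Write `E = Y - P Qᵀ`. By the chain rule `d/dt ½‖E‖² = -⟪E Q, Ṗ⟫ - ⟪Eᵀ P, Q̇⟫`, i.e. the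
unperturbed flow is gradient descent on the loss. Along the perturbed flow each term has
the form `-⟪X, X + W⟫ ≤ -½‖X‖² + ½‖W‖²` (Young), and row by row
`‖E Q‖² ≥ σ_min(Q)² ‖E‖²`, `‖Eᵀ P‖² ≥ σ_min(P)² ‖E‖²`.
-/

open Matrix

attribute [local instance] Matrix.normedAddCommGroup Matrix.normedSpace

/-- Squared Frobenius norm of a real matrix. -/
noncomputable def frobSq {p o : ℕ} (A : Matrix (Fin p) (Fin o) ℝ) : ℝ :=
  ∑ i, ∑ j, (A i j) ^ 2

/-- Square of the smallest singular value of `B` (acting on row vectors `v ↦ v B`). -/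
noncomputable def sminSq {o q : ℕ} (B : Matrix (Fin o) (Fin q) ℝ) : ℝ :=
  sInf {c : ℝ | ∃ v : Fin o → ℝ, (∑ i, (v i) ^ 2) = 1 ∧ c = ∑ j, (∑ i, v i * B i j) ^ 2}

section MatrixDeriv

variable {l m n : Type*} {t : ℝ}

theorem Matrix.hasDerivAt_iff_apply [Fintype m] [Fintype n] {A : ℝ → Matrix m n ℝ}
    {A' : Matrix m n ℝ} :
    HasDerivAt A A' t ↔ ∀ i j, HasDerivAt (fun s => A s i j) (A' i j) t :=
  hasDerivAt_pi.trans <| forall_congr' fun _ => hasDerivAt_pi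

theorem HasDerivAt.matrix_transpose [Fintype m] [Fintype n] {A : ℝ → Matrix m n ℝ}
    {A' : Matrix m n ℝ} (hA : HasDerivAt A A' t) : HasDerivAt (fun s => (A s)ᵀ) A'ᵀ t :=
  Matrix.hasDerivAt_iff_apply.2 fun j i => Matrix.hasDerivAt_iff_apply.1 hA i j

theorem HasDerivAt.matrix_mul [Fintype l] [Fintype m] [Fintype n] {A : ℝ → Matrix l m ℝ}
    {B : ℝ → Matrix m n ℝ}
    {A' : Matrix l m ℝ} {B' : Matrix m n ℝ} (hA : HasDerivAt A A' t) (hB : HasDerivAt B B' t) :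
    HasDerivAt (fun s => A s * B s) (A' * B t + A t * B') t := by
  refine Matrix.hasDerivAt_iff_apply.2 fun i j => ?_
  simp only [Matrix.add_apply, Matrix.mul_apply, ← Finset.sum_add_distrib]
  exact HasDerivAt.fun_sum fun k _ =>
    (Matrix.hasDerivAt_iff_apply.1 hA i k).mul (Matrix.hasDerivAt_iff_apply.1 hB k j)

end MatrixDeriv

section Frobenius

variable {p o q : ℕ}

def frobInner (A B : Matrix (Fin p) (Fin o) ℝ) : ℝ :=
  ∑ i, ∑ j, A i j * B i j

theorem frobSq_eq_frobInner (A : Matrix (Fin p) (Fin o) ℝ) : frobSq A = frobInner A A := by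
  simp only [frobSq, frobInner, sq]

theorem frobSq_nonneg (A : Matrix (Fin p) (Fin o) ℝ) : 0 ≤ frobSq A := by
  unfold frobSq; positivity

theorem frobSq_transpose (A : Matrix (Fin p) (Fin o) ℝ) : frobSq Aᵀ = frobSq A :=
  Finset.sum_comm

theorem frobInner_add_right (A B C : Matrix (Fin p) (Fin o) ℝ) :
    frobInner A (B + C) = frobInner A B + frobInner A C := by
  simp only [frobInner, Matrix.add_apply, mul_add, Finset.sum_add_distrib]

theorem frobInner_neg_right (A B : Matrix (Fin p) (Fin o) ℝ) :
    frobInner A (-B) = -frobInner A B := by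
  simp only [frobInner, Matrix.neg_apply, mul_neg, Finset.sum_neg_distrib]

theorem frobInner_transpose (A B : Matrix (Fin p) (Fin o) ℝ) :
    frobInner Aᵀ Bᵀ = frobInner A B :=
  Finset.sum_comm

theorem frobInner_mul_transpose (E : Matrix (Fin p) (Fin o) ℝ) (X : Matrix (Fin p) (Fin q) ℝ)
    (B : Matrix (Fin o) (Fin q) ℝ) : frobInner E (X * Bᵀ) = frobInner (E * B) X := by
  simp only [frobInner, Matrix.mul_apply, Matrix.transpose_apply, Finset.mul_sum, Finset.sum_mul]
  refine Finset.sum_congr rfl fun i _ => ?_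
  rw [Finset.sum_comm]
  exact Finset.sum_congr rfl fun _ _ => Finset.sum_congr rfl fun _ _ => by ring

theorem frobInner_mul_transpose' (E : Matrix (Fin p) (Fin o) ℝ) (A : Matrix (Fin p) (Fin q) ℝ)
    (X : Matrix (Fin o) (Fin q) ℝ) : frobInner E (A * Xᵀ) = frobInner (Eᵀ * A) X := by
  rw [← frobInner_transpose, transpose_mul, transpose_transpose, frobInner_mul_transpose]

theorem frobSq_add (A B : Matrix (Fin p) (Fin o) ℝ) :
    frobSq (A + B) = frobSq A + 2 * frobInner A B + frobSq B := by
  simp only [frobSq, frobInner, Matrix.add_apply, Finset.mul_sum, ← Finset.sum_add_distrib]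
  exact Finset.sum_congr rfl fun _ _ => Finset.sum_congr rfl fun _ _ => by ring

theorem neg_frobInner_le (A B : Matrix (Fin p) (Fin o) ℝ) :
    -frobInner A B ≤ 1 / 2 * (frobSq A + frobSq B) := by
  linarith [frobSq_add A B, frobSq_nonneg (A + B)]

theorem HasDerivAt.frobSq {F : ℝ → Matrix (Fin p) (Fin o) ℝ} {F' : Matrix (Fin p) (Fin o) ℝ}
    {t : ℝ} (hF : HasDerivAt F F' t) :
    HasDerivAt (fun s => frobSq (F s)) (2 * frobInner (F t) F') t := by
  have hentry := Matrix.hasDerivAt_iff_apply.1 hF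
  simp only [_root_.frobSq, frobInner, Finset.mul_sum]
  exact HasDerivAt.fun_sum fun i _ => HasDerivAt.fun_sum fun j _ =>
    ((hentry i j).fun_pow 2).congr_deriv (by norm_num; ring)

theorem neg_frobInner_self_add_le (A B : Matrix (Fin p) (Fin o) ℝ) :
    -frobInner A (A + B) ≤ -(1 / 2 * frobSq A) + 1 / 2 * frobSq B := by
  rw [frobInner_add_right, ← frobSq_eq_frobInner]
  linarith [neg_frobInner_le A B]

theorem sminSq_mul_sum_sq_le (B : Matrix (Fin o) (Fin q) ℝ) (v : Fin o → ℝ) :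
    sminSq B * ∑ i, v i ^ 2 ≤ ∑ j, (∑ i, v i * B i j) ^ 2 := by
  set s := ∑ i, v i ^ 2
  rcases (show 0 ≤ s by positivity).eq_or_lt with hs | hs
  · rw [← hs, mul_zero]
    positivity
  have hmin : sminSq B ≤ (∑ j, (∑ i, v i * B i j) ^ 2) / s := by
    refine csInf_le ⟨0, by rintro _ ⟨w, -, rfl⟩; positivity⟩ ⟨fun i => v i / √s, ?_, ?_⟩
    · simp only [div_pow, Real.sq_sqrt hs.le, ← Finset.sum_div]
      exact div_self hs.ne'
    · simp only [div_mul_eq_mul_div, ← Finset.sum_div, div_pow, Real.sq_sqrt hs.le]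
  calc sminSq B * s ≤ (∑ j, (∑ i, v i * B i j) ^ 2) / s * s :=
        mul_le_mul_of_nonneg_right hmin hs.le
    _ = ∑ j, (∑ i, v i * B i j) ^ 2 := div_mul_cancel₀ _ hs.ne'

theorem sminSq_mul_frobSq_le (A : Matrix (Fin p) (Fin o) ℝ) (B : Matrix (Fin o) (Fin q) ℝ) :
    sminSq B * frobSq A ≤ frobSq (A * B) := by
  rw [frobSq, frobSq, Finset.mul_sum]
  exact Finset.sum_le_sum fun i _ => sminSq_mul_sum_sq_le B (A i)

end Frobenius

theorem hasDerivAt_half_frobSq_sub_mul_transpose {n m k : ℕ} (Y : Matrix (Fin n) (Fin m) ℝ)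
    {P : ℝ → Matrix (Fin n) (Fin k) ℝ} {Q : ℝ → Matrix (Fin m) (Fin k) ℝ}
    {P' : Matrix (Fin n) (Fin k) ℝ} {Q' : Matrix (Fin m) (Fin k) ℝ} {t : ℝ}
    (hP : HasDerivAt P P' t) (hQ : HasDerivAt Q Q' t) :
    HasDerivAt (fun s => 1 / 2 * frobSq (Y - P s * (Q s)ᵀ))
      (-(frobInner ((Y - P t * (Q t)ᵀ) * Q t) P' +
        frobInner ((Y - P t * (Q t)ᵀ)ᵀ * P t) Q')) t := by
  refine ((((hP.matrix_mul hQ.matrix_transpose).const_sub Y).frobSq).const_mul _).congr_deriv ?_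
  rw [frobInner_neg_right, frobInner_add_right, frobInner_mul_transpose, frobInner_mul_transpose']
  ring

theorem stmt2 {n m k : ℕ} (Y : Matrix (Fin n) (Fin m) ℝ)
    (P U : ℝ → Matrix (Fin n) (Fin k) ℝ) (Q V : ℝ → Matrix (Fin m) (Fin k) ℝ)
    (hP : ∀ t, HasDerivAt P ((Y - P t * (Q t)ᵀ) * Q t + U t) t)
    (hQ : ∀ t, HasDerivAt Q ((Y - P t * (Q t)ᵀ)ᵀ * P t + V t) t)
    (t : ℝ) :
    ∃ L' : ℝ, HasDerivAt (fun s => (1 : ℝ) / 2 * frobSq (Y - P s * (Q s)ᵀ)) L' t ∧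
      L' ≤ -((1 : ℝ) / 2 * frobSq (Y - P t * (Q t)ᵀ)) * (sminSq (P t) + sminSq (Q t))
            + (1 : ℝ) / 2 * (frobSq (U t) + frobSq (V t)) := by
  refine ⟨_, hasDerivAt_half_frobSq_sub_mul_transpose Y (hP t) (hQ t), ?_⟩
  set E := Y - P t * (Q t)ᵀ
  have hU := neg_frobInner_self_add_le (E * Q t) (U t)
  have hV := neg_frobInner_self_add_le (Eᵀ * P t) (V t)
  have hσQ := sminSq_mul_frobSq_le E (Q t)
  have hσP := sminSq_mul_frobSq_le Eᵀ (P t)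
  rw [frobSq_transpose] at hσP
  linarith
end

section
/- Let Ȳ ∈ ℝ^{n×m}, P ∈ ℝ^{n×k}, Q ∈ ℝ^{m×k} with k ≥ m, n. If (Ȳ − PQᵀ)Q = 0 and (Ȳ − PQᵀ)ᵀP = 0, then there exist an SVD Ȳ − PQᵀ = ΨΣΦᵀ and orthogonal matrices Γ_P, Γ_Q such that P = ΨΣ_PΓ_Pᵀ and Q = ΦΣ_QΓ_Qᵀ are SVDs of P and Q with ΣΣ_Q = 0 and ΣᵀΣ_P = 0. -/
/-!
Write `R = Y - P Qᵀ`, so that `R Q = 0` and `Rᵀ P = 0`. Then `(R Rᵀ)(P Pᵀ) = 0`, and an orthonormal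
eigenbasis `Ψ` of `R Rᵀ - P Pᵀ` diagonalises `R Rᵀ` and `P Pᵀ` separately: they are the positive
and the negative part of the difference. Likewise an eigenbasis `V` of `Rᵀ R - Q Qᵀ` diagonalises
`Rᵀ R` and `Q Qᵀ`. Sort both bases so that the `rank R` nonzero eigenvalues of `R Rᵀ` and of `Rᵀ R`
come first, and replace those columns `vⱼ` of `V` by `Rᵀ ψⱼ / σⱼ`; the resulting `Φ` is orthogonal
because the remaining columns of `V` span `ker R`, `Ψᵀ R Φ = Σ` is rectangular diagonal, and
`Φᵀ Q Qᵀ Φ` is still diagonal because `Q` maps into `ker R`. The same completion, applied to the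
matrices `Ψᵀ P` and `Φᵀ Q` with orthogonal rows, yields `Γ_P` and `Γ_Q`. Finally `Σ Σ_Q = 0` and
`Σᵀ Σ_P = 0` are `R Q = 0` and `Rᵀ P = 0` read in these bases.
-/

open Matrix

/-- A real square matrix is orthogonal. -/
def IsOrth {n : ℕ} (M : Matrix (Fin n) (Fin n) ℝ) : Prop := Mᵀ * M = 1

/-- A rectangular diagonal matrix with nonnegative diagonal entries. -/
def IsRectDiag {p o : ℕ} (S : Matrix (Fin p) (Fin o) ℝ) : Prop :=
  (∀ (i : Fin p) (j : Fin o), (i : ℕ) ≠ (j : ℕ) → S i j = 0) ∧ ∀ i j, 0 ≤ S i j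

theorem IsOrth.mul_transpose {n : ℕ} {M : Matrix (Fin n) (Fin n) ℝ} (hM : IsOrth M) :
    M * Mᵀ = 1 :=
  mul_eq_one_comm.mp hM

theorem IsOrth.eq_mul_mul_transpose_of_transpose_mul_mul_eq {n m : ℕ}
    {U : Matrix (Fin n) (Fin n) ℝ} {V : Matrix (Fin m) (Fin m) ℝ} (hU : IsOrth U) (hV : IsOrth V)
    {A B : Matrix (Fin n) (Fin m) ℝ} (h : Uᵀ * A * V = B) : A = U * B * Vᵀ := by
  rw [← h, ← Matrix.mul_assoc, ← Matrix.mul_assoc, hU.mul_transpose, Matrix.one_mul,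
    Matrix.mul_assoc, hV.mul_transpose, Matrix.mul_one]

theorem IsOrth.eq_mul_mul_transpose_of_transpose_mul_eq {n m p : ℕ}
    {U : Matrix (Fin n) (Fin n) ℝ} (hU : IsOrth U) {A : Matrix (Fin n) (Fin m) ℝ}
    {G : Matrix (Fin m) (Fin p) ℝ} {S : Matrix (Fin n) (Fin p) ℝ} (h : Aᵀ * U = G * Sᵀ) :
    A = U * S * Gᵀ := by
  rw [Matrix.mul_assoc, ← transpose_transpose S, ← transpose_mul, ← h, transpose_mul,
    transpose_transpose, ← Matrix.mul_assoc, hU.mul_transpose, Matrix.one_mul]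

theorem IsOrth.mul_mul_transpose_mul_mul_mul_transpose {n m p q r : ℕ}
    {U : Matrix (Fin n) (Fin m) ℝ} {V : Matrix (Fin p) (Fin p) ℝ} (hV : IsOrth V)
    {A : Matrix (Fin m) (Fin p) ℝ} {B : Matrix (Fin p) (Fin q) ℝ} {W : Matrix (Fin r) (Fin q) ℝ} :
    U * A * Vᵀ * (V * B * Wᵀ) = U * (A * B) * Wᵀ := by
  simp only [Matrix.mul_assoc]
  rw [← Matrix.mul_assoc Vᵀ, hV, Matrix.one_mul]

theorem IsOrth.eq_zero_of_mul_mul_transpose_eq_zero {n m : ℕ} {U : Matrix (Fin n) (Fin n) ℝ}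
    {W : Matrix (Fin m) (Fin m) ℝ} (hU : IsOrth U) (hW : IsOrth W) {C : Matrix (Fin n) (Fin m) ℝ}
    (h : U * C * Wᵀ = 0) : C = 0 := by
  calc C = Uᵀ * (U * C * Wᵀ) * W := by
        rw [← Matrix.mul_assoc, ← Matrix.mul_assoc, hU, Matrix.one_mul, Matrix.mul_assoc, hW,
          Matrix.mul_one]
    _ = 0 := by rw [h, Matrix.mul_zero, Matrix.zero_mul]

theorem isOrth_add {n : ℕ} {W₁ W₂ : Matrix (Fin n) (Fin n) ℝ}
    (h : W₁ᵀ * W₁ + W₂ᵀ * W₂ = 1) (h₂₁ : W₂ᵀ * W₁ = 0) : IsOrth (W₁ + W₂) := by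
  have h₁₂ : W₁ᵀ * W₂ = 0 := by
    rw [← transpose_transpose W₂, ← transpose_mul, h₂₁, transpose_zero]
  rw [IsOrth, transpose_add, Matrix.add_mul, Matrix.mul_add, Matrix.mul_add, h₁₂, h₂₁, add_zero,
    zero_add, h]

theorem exists_isOrth_transpose_mul_mul_eq_diagonal {n : ℕ} (A : Matrix (Fin n) (Fin n) ℝ)
    (hA : A.IsSymm) : ∃ (U : Matrix (Fin n) (Fin n) ℝ) (d : Fin n → ℝ),
      IsOrth U ∧ Uᵀ * A * U = diagonal d := by
  have hA' : A.IsHermitian := by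
    rwa [IsHermitian, conjTranspose_eq_transpose_of_trivial]
  refine ⟨hA'.eigenvectorUnitary, hA'.eigenvalues, ?_, ?_⟩
  · simpa [IsOrth, star, conjTranspose_eq_transpose_of_trivial] using
      Unitary.coe_star_mul_self hA'.eigenvectorUnitary
  · simpa [Unitary.conjStarAlgAut_apply, star, conjTranspose_eq_transpose_of_trivial] using
      hA'.conjStarAlgAut_star_eigenvectorUnitary

theorem Matrix.isSymm_transpose_mul_self' {κ ι : Type*} [Fintype κ] (A : Matrix κ ι ℝ) :
    (Aᵀ * A).IsSymm := by
  rw [IsSymm, transpose_mul, transpose_transpose]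

theorem Matrix.transpose_mul_self_apply_self_nonneg {κ ι : Type*} [Fintype κ]
    (A : Matrix κ ι ℝ) (j : ι) : 0 ≤ (Aᵀ * A) j j :=
  Finset.sum_nonneg fun _ _ => mul_self_nonneg _

theorem Matrix.transpose_mul_self_eq_zero {κ ι : Type*} [Fintype κ] {A : Matrix κ ι ℝ} :
    Aᵀ * A = 0 ↔ A = 0 := by
  rw [← conjTranspose_eq_transpose_of_trivial]
  exact conjTranspose_mul_self_eq_zero

theorem Matrix.IsSymm.col_eq_zero_of_mul_self_apply_nonpos {ι : Type*} [Fintype ι]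
    {K : Matrix ι ι ℝ} (hK : K.IsSymm) {j : ι} (h : (K * K) j j ≤ 0) (i : ι) : K i j = 0 := by
  have hsum : ∑ i, K i j * K i j = 0 := by
    refine le_antisymm ?_ (Finset.sum_nonneg fun i _ => mul_self_nonneg _)
    simpa only [mul_apply, ← hK.apply j] using h
  exact mul_self_eq_zero.mp <|
    (Finset.sum_eq_zero_iff_of_nonneg fun i _ => mul_self_nonneg _).mp hsum i (Finset.mem_univ _)

theorem Matrix.mul_diagonal_ite_eq_zero_of_transpose_mul_self_eq_diagonal {κ ι : Type*}
    [Fintype κ] [Fintype ι] [DecidableEq ι] {A : Matrix κ ι ℝ} {d : ι → ℝ}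
    (hA : Aᵀ * A = diagonal d) : A * diagonal (fun j => if d j = 0 then (1 : ℝ) else 0) = 0 := by
  rw [← transpose_mul_self_eq_zero, transpose_mul, diagonal_transpose, Matrix.mul_assoc,
    ← Matrix.mul_assoc Aᵀ, hA, diagonal_mul_diagonal, diagonal_mul_diagonal]
  refine (congrArg diagonal (funext fun j => ?_)).trans diagonal_zero
  split_ifs with h <;> simp [h]

theorem Matrix.transpose_mul_self_eq_diagonal_max {κ μ ι : Type*} [Fintype κ] [Fintype μ]
    [Fintype ι] [DecidableEq ι] {A : Matrix κ ι ℝ} {B : Matrix μ ι ℝ} {d : ι → ℝ}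
    (hAB : A * Bᵀ = 0) (hd : Aᵀ * A - Bᵀ * B = diagonal d) :
    Aᵀ * A = diagonal fun i => max (d i) 0 := by
  set M := Aᵀ * A
  set N := Bᵀ * B
  have hMN : M * N = 0 := by
    simp only [M, N, Matrix.mul_assoc, ← Matrix.mul_assoc A, hAB, Matrix.zero_mul,
      Matrix.mul_zero]
  have hNM : N * M = 0 := by
    have hBA : B * Aᵀ = 0 := by rw [← transpose_transpose B, ← transpose_mul, hAB, transpose_zero]
    simp only [M, N, Matrix.mul_assoc, ← Matrix.mul_assoc B, hBA, Matrix.zero_mul,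
      Matrix.mul_zero]
  -- `M² = M D` and `N² = -N D`, so the column `j` of `M` (if `d j ≤ 0`) or of `N` (if `d j > 0`)
  -- has a nonpositive sum of squares.
  ext i j
  rcases le_or_gt (d j) 0 with hj | hj
  · have hMM : (M * M) j j ≤ 0 := by
      have : M * M = M * diagonal d := by rw [← hd, Matrix.mul_sub, hMN, sub_zero]
      rw [this, mul_diagonal]
      exact mul_nonpos_of_nonneg_of_nonpos (transpose_mul_self_apply_self_nonneg A j) hj
    have hMij : M i j = 0 :=
      (isSymm_transpose_mul_self' A).col_eq_zero_of_mul_self_apply_nonpos hMM i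
    obtain rfl | hij := eq_or_ne i j
    · simp [hMij, hj]
    · simp [hMij, hij]
  · have hNN : (N * N) j j ≤ 0 := by
      have : N * N = -(N * diagonal d) := by rw [← hd, Matrix.mul_sub, hNM, zero_sub, neg_neg]
      rw [this, neg_apply, mul_diagonal, neg_nonpos]
      exact mul_nonneg (transpose_mul_self_apply_self_nonneg B j) hj.le
    have hM : M = diagonal d + N := by rw [← hd, sub_add_cancel]
    have hNij : N i j = 0 :=
      (isSymm_transpose_mul_self' B).col_eq_zero_of_mul_self_apply_nonpos hNN i
    obtain rfl | hij := eq_or_ne i j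
    · simp [hM, hNij, hj.le]
    · simp [hM, hNij, hij]

theorem Equiv.Perm.exists_apply_iff_of_card_eq {α : Type*} [Fintype α] {p q : α → Prop}
    [DecidablePred p] [DecidablePred q] (h : Fintype.card {x // q x} = Fintype.card {x // p x}) :
    ∃ σ : Equiv.Perm α, ∀ x, p (σ x) ↔ q x := by
  let e := Fintype.equivOfCardEq h
  exact ⟨e.extendSubtype, fun x =>
    ⟨fun hp => by_contra fun hq => e.extendSubtype_not_mem x hq hp, e.extendSubtype_mem x⟩⟩

theorem Matrix.transpose_mul_self_mul_submatrix {κ : Type*} [Fintype κ] {c : ℕ}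
    (X : Matrix κ (Fin c) ℝ) (U : Matrix (Fin c) (Fin c) ℝ) (σ : Equiv.Perm (Fin c)) :
    (X * U.submatrix id σ)ᵀ * (X * U.submatrix id σ) = ((X * U)ᵀ * (X * U)).submatrix σ σ := by
  have hXU : X * U.submatrix id σ = (X * U).submatrix id σ :=
    submatrix_mul_equiv X U id (Equiv.refl _) σ
  rw [hXU, transpose_submatrix]
  exact submatrix_mul_equiv _ _ σ (Equiv.refl _) σ

/-- `U` is an orthonormal eigenbasis of `Xᵀ X - Zᵀ Z`, permuted so that the positive eigenvalues
sit where `p` holds. -/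
theorem exists_isOrth_gram_diagonal_of_mul_transpose_eq_zero {a b c : ℕ}
    (X : Matrix (Fin a) (Fin c) ℝ) (Z : Matrix (Fin b) (Fin c) ℝ) (hXZ : X * Zᵀ = 0)
    (p : Fin c → Prop) [DecidablePred p] (hp : Fintype.card {i // p i} = X.rank) :
    ∃ (U : Matrix (Fin c) (Fin c) ℝ) (g h : Fin c → ℝ), IsOrth U ∧
      (X * U)ᵀ * (X * U) = diagonal g ∧ (Z * U)ᵀ * (Z * U) = diagonal h ∧
      ∀ i, g i ≠ 0 ↔ p i := by
  obtain ⟨U, d, hU, hUd⟩ := exists_isOrth_transpose_mul_mul_eq_diagonal (Xᵀ * X - Zᵀ * Z)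
    ((isSymm_transpose_mul_self' X).sub (isSymm_transpose_mul_self' Z))
  have hcross : (X * U) * (Z * U)ᵀ = 0 := by
    rw [transpose_mul, Matrix.mul_assoc, ← Matrix.mul_assoc U, hU.mul_transpose,
      Matrix.one_mul, hXZ]
  have hcross' : (Z * U) * (X * U)ᵀ = 0 := by
    rw [← transpose_transpose (Z * U), ← transpose_mul, hcross, transpose_zero]
  have hdiff : (X * U)ᵀ * (X * U) - (Z * U)ᵀ * (Z * U) = diagonal d := by
    rw [← hUd]
    simp only [transpose_mul, Matrix.mul_sub, Matrix.sub_mul, Matrix.mul_assoc]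
  have hdiff' : (Z * U)ᵀ * (Z * U) - (X * U)ᵀ * (X * U) = diagonal (-d) := by
    rw [← neg_sub, hdiff, diagonal_neg]
    rfl
  set g : Fin c → ℝ := fun i => max (d i) 0
  have hg : (X * U)ᵀ * (X * U) = diagonal g := transpose_mul_self_eq_diagonal_max hcross hdiff
  have hh := transpose_mul_self_eq_diagonal_max hcross' hdiff'
  have hrank : Fintype.card {i // g i ≠ 0} = X.rank := by
    rw [← rank_diagonal, ← hg, rank_transpose_mul_self,
      rank_mul_eq_left_of_isUnit_det _ _ (isUnit_det_of_left_inverse hU)]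
  obtain ⟨σ, hσ⟩ :=
    Equiv.Perm.exists_apply_iff_of_card_eq (p := fun i => g i ≠ 0) (hp.trans hrank.symm)
  refine ⟨U.submatrix id σ, g ∘ σ, (fun i => max (-d i) 0) ∘ σ, ?_, ?_, ?_, hσ⟩
  · rw [IsOrth, transpose_submatrix]
    exact (submatrix_mul_equiv _ _ σ (Equiv.refl _) σ).trans (by rw [hU, submatrix_one_equiv])
  · rw [transpose_mul_self_mul_submatrix, hg, submatrix_diagonal_equiv]
  · rw [transpose_mul_self_mul_submatrix, hh, submatrix_diagonal_equiv]
    rfl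

def rectDiag {p o : ℕ} (v : Fin p → ℝ) : Matrix (Fin p) (Fin o) ℝ :=
  of fun i j => if (i : ℕ) = j then v i else 0

theorem isRectDiag_rectDiag_sqrt {p o : ℕ} (v : Fin p → ℝ) :
    IsRectDiag (rectDiag (o := o) fun i => √(v i)) := by
  refine ⟨fun i j hij => by simp [rectDiag, hij], fun i j => ?_⟩
  simp only [rectDiag, of_apply]
  split_ifs <;> positivity

theorem diagonal_mul_rectDiag {p o : ℕ} (a v : Fin p → ℝ) :
    diagonal a * (rectDiag v : Matrix (Fin p) (Fin o) ℝ) = rectDiag (a * v) := by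
  ext i j
  simp [rectDiag, diagonal_mul]

theorem rectDiag_transpose_mul_rectDiag {p o : ℕ} (v w : Fin p → ℝ) :
    (rectDiag v : Matrix (Fin p) (Fin o) ℝ)ᵀ * rectDiag w =
      diagonal fun j : Fin o => if h : (j : ℕ) < p then v ⟨j, h⟩ * w ⟨j, h⟩ else 0 := by
  ext j l
  simp only [mul_apply, transpose_apply, rectDiag, of_apply, diagonal_apply]
  split_ifs with hjl hj
  · subst hjl
    rw [Fintype.sum_eq_single ⟨j, hj⟩ fun i hi => by
      have : (i : ℕ) ≠ j := fun h => hi (Fin.ext h)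
      simp [this]]
    simp
  · subst hjl
    refine Finset.sum_eq_zero fun i _ => ?_
    have : (i : ℕ) ≠ j := fun h => hj (h ▸ i.2)
    simp [this]
  · refine Finset.sum_eq_zero fun i _ => ?_
    by_cases hij : (i : ℕ) = j
    · have : (i : ℕ) ≠ l := fun h => hjl (Fin.ext (hij.symm.trans h))
      simp [this]
    · simp [hij]

theorem diagonal_mul_rectDiag_inv_sqrt {p o : ℕ} (a : Fin p → ℝ) :
    diagonal a * (rectDiag (o := o) fun i => (√(a i))⁻¹) = rectDiag fun i => √(a i) := by
  rw [diagonal_mul_rectDiag]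
  congr 1
  funext i
  simp [← div_eq_mul_inv, Real.div_sqrt]

theorem rectDiag_inv_sqrt_transpose_mul_rectDiag_sqrt {p o : ℕ} {a : Fin p → ℝ}
    (ha : ∀ i, 0 ≤ a i) :
    (rectDiag (o := o) fun i => (√(a i))⁻¹)ᵀ * rectDiag (fun i => √(a i)) =
      diagonal fun j : Fin o => if ∃ h : (j : ℕ) < p, a ⟨j, h⟩ ≠ 0 then 1 else 0 := by
  rw [rectDiag_transpose_mul_rectDiag]
  congr 1
  funext j
  by_cases hj : ∃ h : (j : ℕ) < p, a ⟨j, h⟩ ≠ 0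
  · obtain ⟨h, hne⟩ := hj
    have hpos : 0 < √(a ⟨j, h⟩) := Real.sqrt_pos.mpr (lt_of_le_of_ne (ha _) (Ne.symm hne))
    simp [h, hpos.ne', hne]
  · push Not at hj
    split_ifs with h <;> simp_all

/-- The witness is `Φ = Rᵀ U T + V E`: `T` rescales the columns `Rᵀ uⱼ` to unit length (using
`(√0)⁻¹ = 0` on the zero columns) and `E` keeps the columns of `V` that lie in `ker R`. -/
theorem exists_isOrth_transpose_mul_mul_eq_rectDiag {n m : ℕ} (R : Matrix (Fin n) (Fin m) ℝ)
    (U : Matrix (Fin n) (Fin n) ℝ) {V : Matrix (Fin m) (Fin m) ℝ} (hV : IsOrth V)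
    {a : Fin n → ℝ} {a' : Fin m → ℝ} (ha : (Rᵀ * U)ᵀ * (Rᵀ * U) = diagonal a)
    (ha' : (R * V)ᵀ * (R * V) = diagonal a')
    (hsupp : ∀ j : Fin m, a' j ≠ 0 ↔ ∃ h : (j : ℕ) < n, a ⟨j, h⟩ ≠ 0) :
    ∃ Φ : Matrix (Fin m) (Fin m) ℝ, IsOrth Φ ∧ Uᵀ * R * Φ = rectDiag (fun i => √(a i)) ∧
      ∀ {k : ℕ} (Q : Matrix (Fin m) (Fin k) ℝ) (b : Fin m → ℝ), R * Q = 0 →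
        (Qᵀ * V)ᵀ * (Qᵀ * V) = diagonal b → ∃ g, (Qᵀ * Φ)ᵀ * (Qᵀ * Φ) = diagonal g := by
  set T : Matrix (Fin n) (Fin m) ℝ := rectDiag fun i => (√(a i))⁻¹
  set E : Matrix (Fin m) (Fin m) ℝ := diagonal fun j => if a' j = 0 then (1 : ℝ) else 0
  have ha0 : ∀ i, 0 ≤ a i := fun i => by
    simpa only [ha, diagonal_apply_eq] using transpose_mul_self_apply_self_nonneg (Rᵀ * U) i
  have hUR : Uᵀ * R * Rᵀ * U = diagonal a := by
    rw [← ha, transpose_mul, transpose_transpose]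
    simp only [Matrix.mul_assoc]
  have hRVE : R * V * E = 0 := mul_diagonal_ite_eq_zero_of_transpose_mul_self_eq_diagonal ha'
  have hTS : Tᵀ * diagonal a * T + E = 1 := by
    rw [Matrix.mul_assoc, diagonal_mul_rectDiag_inv_sqrt,
      rectDiag_inv_sqrt_transpose_mul_rectDiag_sqrt ha0, diagonal_add, ← diagonal_one]
    congr 1
    funext j
    by_cases ha'j : a' j = 0
    · rw [if_neg fun h => (hsupp j).mpr h ha'j, if_pos ha'j, zero_add]
    · rw [if_pos ((hsupp j).mp ha'j), if_neg ha'j, add_zero]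
  have hcross : (V * E)ᵀ * (Rᵀ * U * T) = 0 := by
    have : (V * E)ᵀ * (Rᵀ * U * T) = (R * V * E)ᵀ * (U * T) := by
      simp only [transpose_mul, Matrix.mul_assoc]
    rw [this, hRVE, transpose_zero, Matrix.zero_mul]
  have hTT : (Rᵀ * U * T)ᵀ * (Rᵀ * U * T) = Tᵀ * diagonal a * T := by
    rw [← hUR]
    simp only [transpose_mul, transpose_transpose, Matrix.mul_assoc]
  have hEE : (V * E)ᵀ * (V * E) = E := by
    rw [transpose_mul, Matrix.mul_assoc, ← Matrix.mul_assoc Vᵀ, hV, Matrix.one_mul,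
      diagonal_transpose, diagonal_mul_diagonal]
    congr 1
    funext j
    split_ifs <;> simp
  refine ⟨Rᵀ * U * T + V * E, isOrth_add (by rw [hTT, hEE, hTS]) hcross, ?_,
    fun Q b hRQ hQV => ?_⟩
  · rw [Matrix.mul_add, ← Matrix.mul_assoc, ← Matrix.mul_assoc, hUR,
      diagonal_mul_rectDiag_inv_sqrt, Matrix.mul_assoc, ← Matrix.mul_assoc R, hRVE,
      Matrix.mul_zero, add_zero]
  · have hQR : Qᵀ * Rᵀ = 0 := by rw [← transpose_mul, hRQ, transpose_zero]
    have hQΦ : Qᵀ * (Rᵀ * U * T + V * E) = Qᵀ * V * E := by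
      rw [Matrix.mul_add, ← Matrix.mul_assoc, ← Matrix.mul_assoc, hQR, Matrix.zero_mul,
        Matrix.zero_mul, zero_add, Matrix.mul_assoc]
    have hgram : (Qᵀ * V * E)ᵀ * (Qᵀ * V * E) = Eᵀ * ((Qᵀ * V)ᵀ * (Qᵀ * V)) * E := by
      simp only [transpose_mul, Matrix.mul_assoc]
    rw [hQΦ, hgram, hQV]
    simp only [E, diagonal_transpose, diagonal_mul_diagonal]
    exact ⟨_, rfl⟩

theorem exists_isOrth_eq_mul_rectDiag_transpose {a c : ℕ} (hac : a ≤ c)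
    (X : Matrix (Fin c) (Fin a) ℝ) {g : Fin a → ℝ} (hX : Xᵀ * X = diagonal g) :
    ∃ G : Matrix (Fin c) (Fin c) ℝ, IsOrth G ∧ X = G * (rectDiag (o := c) fun i => √(g i))ᵀ := by
  let p : Fin c → Prop := fun l => ∃ h : (l : ℕ) < a, g ⟨l, h⟩ ≠ 0
  have hp : Fintype.card {l // p l} = Xᵀ.rank := by
    rw [rank_transpose, ← rank_transpose_mul_self, hX, rank_diagonal]
    exact Fintype.card_congr
      { toFun := fun l => ⟨⟨l.1, l.2.1⟩, l.2.2⟩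
        invFun := fun i => ⟨Fin.castLE hac i.1, i.1.2, i.2⟩
        left_inv := fun _ => rfl
        right_inv := fun _ => rfl }
  obtain ⟨V, g', -, hV, hXV, -, hg'⟩ := exists_isOrth_gram_diagonal_of_mul_transpose_eq_zero
    Xᵀ (0 : Matrix (Fin 0) (Fin c) ℝ) (Matrix.mul_zero _) p hp
  obtain ⟨G, hG, hXG, -⟩ := exists_isOrth_transpose_mul_mul_eq_rectDiag Xᵀ 1 hV
    (by simpa using hX) hXV hg'
  have hXt := (show IsOrth (1 : Matrix (Fin a) (Fin a) ℝ) by simp [IsOrth])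
    |>.eq_mul_mul_transpose_of_transpose_mul_mul_eq hG hXG
  refine ⟨G, hG, ?_⟩
  rw [← transpose_transpose X, hXt, Matrix.one_mul, transpose_mul, transpose_transpose]

theorem stmt16 {n m k : ℕ} (hkm : m ≤ k) (hkn : n ≤ k)
    (Y : Matrix (Fin n) (Fin m) ℝ)
    (P : Matrix (Fin n) (Fin k) ℝ) (Q : Matrix (Fin m) (Fin k) ℝ)
    (hfP : (Y - P * Qᵀ) * Q = 0) (hfQ : (Y - P * Qᵀ)ᵀ * P = 0) :
    ∃ (Psi : Matrix (Fin n) (Fin n) ℝ) (Phi : Matrix (Fin m) (Fin m) ℝ)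
      (GP GQ : Matrix (Fin k) (Fin k) ℝ)
      (S : Matrix (Fin n) (Fin m) ℝ)
      (SP : Matrix (Fin n) (Fin k) ℝ) (SQ : Matrix (Fin m) (Fin k) ℝ),
      IsOrth Psi ∧ IsOrth Phi ∧ IsOrth GP ∧ IsOrth GQ ∧
      IsRectDiag S ∧ IsRectDiag SP ∧ IsRectDiag SQ ∧
      Y - P * Qᵀ = Psi * S * Phiᵀ ∧ P = Psi * SP * GPᵀ ∧ Q = Phi * SQ * GQᵀ ∧
      S * SQ = 0 ∧ Sᵀ * SP = 0 := by
  set R := Y - P * Qᵀ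
  obtain ⟨U, a, b, hU, hRU, hPU, ha⟩ :=
    exists_isOrth_gram_diagonal_of_mul_transpose_eq_zero Rᵀ Pᵀ (by rwa [transpose_transpose])
      (fun i => (i : ℕ) < R.rank)
      (by rw [rank_transpose]; exact Fintype.card_fin_lt_of_le (rank_le_height R))
  obtain ⟨V, a', b', hV, hRV, hQV, ha'⟩ :=
    exists_isOrth_gram_diagonal_of_mul_transpose_eq_zero R Qᵀ (by rwa [transpose_transpose])
      (fun j => (j : ℕ) < R.rank) (Fintype.card_fin_lt_of_le (rank_le_width R))
  obtain ⟨Φ, hΦ, hS, hQΦ⟩ := exists_isOrth_transpose_mul_mul_eq_rectDiag R U hV hRU hRV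
    fun j => (ha' j).trans
      ⟨fun hj => ⟨hj.trans_le (rank_le_height R), (ha _).mpr hj⟩, fun ⟨_, h⟩ => (ha _).mp h⟩
  obtain ⟨g, hg⟩ := hQΦ Q b' hfP hQV
  obtain ⟨GP, hGP, hPU'⟩ := exists_isOrth_eq_mul_rectDiag_transpose hkn (Pᵀ * U) hPU
  obtain ⟨GQ, hGQ, hQΦ'⟩ := exists_isOrth_eq_mul_rectDiag_transpose hkm (Qᵀ * Φ) hg
  have hR := hU.eq_mul_mul_transpose_of_transpose_mul_mul_eq hΦ hS
  have hP := hU.eq_mul_mul_transpose_of_transpose_mul_eq hPU'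
  have hQ := hΦ.eq_mul_mul_transpose_of_transpose_mul_eq hQΦ'
  refine ⟨U, Φ, GP, GQ, _, _, _, hU, hΦ, hGP, hGQ, isRectDiag_rectDiag_sqrt _,
    isRectDiag_rectDiag_sqrt _, isRectDiag_rectDiag_sqrt _, hR, hP, hQ, ?_, ?_⟩
  · refine hU.eq_zero_of_mul_mul_transpose_eq_zero hGQ ?_
    rw [← hΦ.mul_mul_transpose_mul_mul_mul_transpose, ← hR, ← hQ, hfP]
  · refine hΦ.eq_zero_of_mul_mul_transpose_eq_zero hGP ?_
    have hRt := congrArg transpose hR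
    rw [transpose_mul, transpose_mul, transpose_transpose, ← Matrix.mul_assoc] at hRt
    rw [← hU.mul_mul_transpose_mul_mul_mul_transpose, ← hRt, ← hP, hfQ]
end
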